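/- arXiv:2201.01813 — 6 statements merged into one kernel-verified Lean document; each statement's English description precedes it below -/
import Mathlib

section
/- Let σ_a, σ_b be exponential random variables with rates λ_a < λ_b respectively, and let t_a, t_b > 0 satisfy λ_a t_a = λ_b t_b. Then the conditional distribution of σ_a given σ_a ≤ t_a first-order stochastically dominates the conditional distribution of σ_b given σ_b ≤ t_b; that is, for all s ≥ 0, P(σ_b ≤ s | σ_b ≤ t_b) ≥ P(σ_a ≤ s | σ_a ≤ t_a). -/
/-- If `σ_a, σ_b` are exponential with rates `λ_a < λ_b` and `λ_a t_a = λ_b t_b`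
with `t_a, t_b > 0`, then the conditional distribution of `σ_a` given `σ_a ≤ t_a`
first-order stochastically dominates that of `σ_b` given `σ_b ≤ t_b`:
for every `s ≥ 0`,
`P(σ_a ≤ s | σ_a ≤ t_a) ≤ P(σ_b ≤ s | σ_b ≤ t_b)`,
where `P(σ ≤ s | σ ≤ t) = (1 - e^{-λ min(s,t)})/(1 - e^{-λ t})`. -/
theorem stmt2 (lama lamb ta tb : ℝ) (hla : 0 < lama) (hab : lama < lamb)
    (hta : 0 < ta) (htb : 0 < tb) (heq : lama * ta = lamb * tb) :
    ∀ s : ℝ, 0 ≤ s →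
      (1 - Real.exp (-(lama * min s ta))) / (1 - Real.exp (-(lama * ta))) ≤
      (1 - Real.exp (-(lamb * min s tb))) / (1 - Real.exp (-(lamb * tb))) := by
  intro s hs
  have htab : tb ≤ ta := by nlinarith
  have hkey : lama * min s ta ≤ lamb * min s tb := by
    rcases le_total s tb with h | h
    · rw [min_eq_left h, min_eq_left (h.trans htab)]
      nlinarith
    · rw [min_eq_right h]
      have := min_le_right s ta
      nlinarith
  have hden : 0 < 1 - Real.exp (-(lama * ta)) := by
    have : Real.exp (-(lama * ta)) < 1 := by
      rw [Real.exp_lt_one_iff]; nlinarith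
    linarith
  rw [← heq]
  have := Real.exp_le_exp.mpr (neg_le_neg hkey)
  gcongr
end

section
/- Let r, κ, φ_a, φ_b, λ_a, λ_b, c > 0 with c < λ_a < λ_b. Define r·w_b(1) = κφ_b(λ_b - c)/(r + κφ_b + λ_b) and r·w_{ab}(1) = [κφ_b(λ_b - c)(r + λ_a) + κφ_a(λ_a - c)(r + λ_b)] / [(r + λ_a)(r + λ_b) + κφ_b(r + λ_a) + κφ_a(r + λ_b)]. If λ_a - c > r·w_{ab}(1), then λ_a - c > r·w_b(1). -/
/-- If `λ_a - c > r w_{ab}(1)` then `λ_a - c > r w_b(1)`, where `w_b(1)` and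
`w_{ab}(1)` are the reservation values of reputation 1 when only `b`-projects,
resp. both project types, are accepted. -/
theorem stmt6 (r κ φa φb lama lamb c wb1 wab1 : ℝ)
    (hr : 0 < r) (hκ : 0 < κ) (hφa : 0 < φa) (hφb : 0 < φb)
    (hc : 0 < c) (hca : c < lama) (hab : lama < lamb)
    (hwb : r * wb1 = κ * φb * (lamb - c) / (r + κ * φb + lamb))
    (hwab : r * wab1 =
      (κ * φb * (lamb - c) * (r + lama) + κ * φa * (lama - c) * (r + lamb)) /
        ((r + lama) * (r + lamb) + κ * φb * (r + lama) + κ * φa * (r + lamb))) :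
    lama - c > r * wab1 → lama - c > r * wb1 := by
  intro h
  have hb : 0 < lamb := lt_trans (lt_trans hc hca) hab
  have ha : 0 < lama := lt_trans hc hca
  have hd1 : 0 < r + κ * φb + lamb := by positivity
  have hd2 : 0 < (r + lama) * (r + lamb) + κ * φb * (r + lama) + κ * φa * (r + lamb) := by
    positivity
  have hra : 0 < r + lama := by positivity
  rw [hwab, gt_iff_lt, div_lt_iff₀ hd2] at h
  rw [hwb, gt_iff_lt, div_lt_iff₀ hd1]
  nlinarith [mul_pos hra hd1, mul_pos (mul_pos hκ hφa) (by positivity : (0:ℝ) < r + lamb)]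
end

section
/- With the notation of the previous statement (v defined on (β,1] with β = c/(λ_b(1+W)), c < λ_b(1+W)), the function v satisfies the ODE r·v(π) = -c + λ_b π (1 + W - v(π)) - λ_b π(1-π) v′(π) for all π ∈ (β,1). -/
set_option maxHeartbeats 1000000

private lemma hjb_aux1 (r l c W π : ℝ) (hr : r ≠ 0) (hrl : r + l ≠ 0) :
    r * (-c / r + (l / (r + l)) * (1 + W + c / r) * π)
      = -c + l * π * (1 + W - (-c / r + (l / (r + l)) * (1 + W + c / r) * π))
        - l * π * (1 - π) * ((l / (r + l)) * (1 + W + c / r)) := by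
  field_simp
  ring

private lemma hjb_aux2 (r l π β K P Q : ℝ) (hl : l ≠ 0) (hβ : β ≠ 0)
    (h1β : 1 - β ≠ 0) (hπ : π ≠ 0) :
    r * (K * ((1 - π) / (1 - β) * P) * Q)
      = -(l * π * (K * ((1 - π) / (1 - β) * P) * Q))
        - l * π * (1 - π) * (K * ((-1) / (1 - β) * (1 + r / l) * P) * Q
            + K * ((1 - π) / (1 - β) * P) * (1 / β * (-(r / l)) * (Q / (π / β)))) := by
  field_simp
  ring

/-- The candidate value function `v` satisfies the HJB equation
`r v(π) = -c + λ_b π (1 + W - v(π)) - λ_b π (1-π) v'(π)` on `(β,1)`. -/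
theorem stmt9 (r lamb c W : ℝ) (hr : 0 < r) (hl : 0 < lamb) (hc : 0 < c)
    (hW : 0 < W) (hcost : c < lamb * (1 + W)) :
    let β : ℝ := c / (lamb * (1 + W))
    let v : ℝ → ℝ := fun π =>
      -c / r + (lamb / (r + lamb)) * (1 + W + c / r) * π
        + (c / r - (lamb / (r + lamb)) * (1 + W + c / r) * β)
          * ((1 - π) / (1 - β)) ^ ((1 + r / lamb : ℝ))
          * (π / β) ^ ((-(r / lamb)) : ℝ)
    ∀ π ∈ Set.Ioo β 1,
      r * v π = -c + lamb * π * (1 + W - v π)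
        - lamb * π * (1 - π) * deriv v π := by
  intro β v π hπ
  obtain ⟨hβπ, hπ1⟩ := hπ
  have hlW : 0 < lamb * (1 + W) := by positivity
  have hβ : (0:ℝ) < β := div_pos hc hlW
  have hβ1 : β < 1 := (div_lt_one hlW).2 hcost
  have hπ0 : 0 < π := hβ.trans hβπ
  have h1π : 0 < 1 - π := by linarith
  have h1β : 0 < 1 - β := by linarith
  have hu : 0 < (1 - π) / (1 - β) := by positivity
  have ht : 0 < π / β := by positivity
  have hrl : 0 < r + lamb := by linarith
  have hd1 : HasDerivAt (fun x : ℝ => ((1 - x) / (1 - β)) ^ ((1 + r / lamb : ℝ)))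
      ((-1) / (1 - β) * (1 + r / lamb) * ((1 - π) / (1 - β)) ^ ((1 + r / lamb) - 1 : ℝ)) π := by
    have h0 : HasDerivAt (fun x : ℝ => (1 - x) / (1 - β)) ((-1) / (1 - β)) π := by
      simpa using ((hasDerivAt_id π).const_sub 1).div_const (1 - β)
    exact h0.rpow_const (Or.inl (ne_of_gt hu))
  have hd2 : HasDerivAt (fun x : ℝ => (x / β) ^ ((-(r / lamb)) : ℝ))
      (1 / β * (-(r / lamb)) * (π / β) ^ ((-(r / lamb)) - 1 : ℝ)) π := by
    have h0 : HasDerivAt (fun x : ℝ => x / β) (1 / β) π := by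
      simpa using (hasDerivAt_id π).div_const β
    exact h0.rpow_const (Or.inl (ne_of_gt ht))
  have hlin : HasDerivAt (fun x : ℝ => -c / r + (lamb / (r + lamb)) * (1 + W + c / r) * x)
      ((lamb / (r + lamb)) * (1 + W + c / r)) π := by
    simpa using (((hasDerivAt_id π).const_mul ((lamb / (r + lamb)) * (1 + W + c / r))).const_add (-c / r))
  have hdv : HasDerivAt v
      ((lamb / (r + lamb)) * (1 + W + c / r)
        + (((c / r - (lamb / (r + lamb)) * (1 + W + c / r) * β)
              * ((-1) / (1 - β) * (1 + r / lamb) * ((1 - π) / (1 - β)) ^ ((1 + r / lamb) - 1 : ℝ)))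
              * (π / β) ^ ((-(r / lamb)) : ℝ)
           + ((c / r - (lamb / (r + lamb)) * (1 + W + c / r) * β)
              * ((1 - π) / (1 - β)) ^ ((1 + r / lamb : ℝ)))
              * (1 / β * (-(r / lamb)) * (π / β) ^ ((-(r / lamb)) - 1 : ℝ)))) π := by
    exact hlin.add (((hd1.const_mul _).mul hd2))
  show r * (-c / r + (lamb / (r + lamb)) * (1 + W + c / r) * π
        + (c / r - (lamb / (r + lamb)) * (1 + W + c / r) * β)
          * ((1 - π) / (1 - β)) ^ ((1 + r / lamb : ℝ))
          * (π / β) ^ ((-(r / lamb)) : ℝ))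
      = -c + lamb * π * (1 + W - (-c / r + (lamb / (r + lamb)) * (1 + W + c / r) * π
        + (c / r - (lamb / (r + lamb)) * (1 + W + c / r) * β)
          * ((1 - π) / (1 - β)) ^ ((1 + r / lamb : ℝ))
          * (π / β) ^ ((-(r / lamb)) : ℝ)))
        - lamb * π * (1 - π) * deriv v π
  rw [hdv.deriv]
  have e1 : ((1 - π) / (1 - β)) ^ ((1 + r / lamb) - 1 : ℝ)
      = ((1 - π) / (1 - β)) ^ (r / lamb : ℝ) := by norm_num
  have e2 : ((1 - π) / (1 - β)) ^ ((1 + r / lamb) : ℝ)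
      = ((1 - π) / (1 - β)) * ((1 - π) / (1 - β)) ^ (r / lamb : ℝ) := by
    rw [Real.rpow_add hu, Real.rpow_one]
  have e3 : (π / β) ^ ((-(r / lamb)) - 1 : ℝ)
      = (π / β) ^ ((-(r / lamb)) : ℝ) / (π / β) := by
    rw [Real.rpow_sub ht, Real.rpow_one]
  rw [e1, e2, e3]
  set P : ℝ := ((1 - π) / (1 - β)) ^ (r / lamb : ℝ) with hP
  set Q : ℝ := (π / β) ^ ((-(r / lamb)) : ℝ) with hQ
  linear_combination (hjb_aux1 r lamb c W π (ne_of_gt hr) (ne_of_gt hrl))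
    + (hjb_aux2 r lamb π β (c / r - (lamb / (r + lamb)) * (1 + W + c / r) * β) P Q
        (ne_of_gt hl) (ne_of_gt hβ) (ne_of_gt h1β) (ne_of_gt hπ0))
end

section
/- Let r, λ_b, c, W > 0 with c < λ_b(1+W), β = c/(λ_b(1+W)), and let v be the function v(π) = -c/r + (λ_b/(r+λ_b))(1+W+c/r)π + [c/r - (λ_b/(r+λ_b))(1+W+c/r)β]((1-π)/(1-β))^{1+r/λ_b}(π/β)^{-r/λ_b} on (β,1]. Then v is convex on (β,1), and strictly convex on (β,1). -/
/-- The candidate value function `v = v*_b` is convex, and indeed strictly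
convex, on `(β, 1)`. -/
theorem stmt10 (r lamb c W : ℝ) (hr : 0 < r) (hl : 0 < lamb) (hc : 0 < c)
    (hW : 0 < W) (hcost : c < lamb * (1 + W)) :
    let β : ℝ := c / (lamb * (1 + W))
    let v : ℝ → ℝ := fun π =>
      -c / r + (lamb / (r + lamb)) * (1 + W + c / r) * π
        + (c / r - (lamb / (r + lamb)) * (1 + W + c / r) * β)
          * ((1 - π) / (1 - β)) ^ ((1 + r / lamb : ℝ))
          * (π / β) ^ ((-(r / lamb)) : ℝ)
    ConvexOn ℝ (Set.Ioo β 1) v ∧ StrictConvexOn ℝ (Set.Ioo β 1) v := by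
  intro β v
  have hβ : β = c / (lamb * (1 + W)) := rfl
  have hlW : 0 < lamb * (1 + W) := by positivity
  have hβ0 : 0 < β := hβ ▸ div_pos hc hlW
  have hβ1 : β < 1 := by rw [hβ]; exact (div_lt_one hlW).mpr hcost
  have h1β : 0 < 1 - β := by linarith
  set b : ℝ := r / lamb with hb
  have hbpos : 0 < b := div_pos hr hl
  set a : ℝ := 1 + b with ha
  have hapos : 0 < a := by linarith
  have ha1 : 0 < a - 1 := by rw [ha]; linarith
  set B : ℝ := lamb / (r + lamb) * (1 + W + c / r) with hB
  set K : ℝ := c / r - B * β with hK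
  have hKpos : 0 < K := by
    have hK' : K = c * (lamb * (1 + W) - c) / (r * ((r + lamb) * (1 + W))) := by
      rw [hK, hB, hβ]
      field_simp
      ring
    rw [hK']
    exact div_pos (mul_pos hc (by linarith)) (by positivity)
  set C : ℝ := K * (1 - β) ^ (-a : ℝ) * β ^ (b : ℝ) with hC
  have hCpos : 0 < C := by
    have h1 := Real.rpow_pos_of_pos h1β (-a)
    have h2 := Real.rpow_pos_of_pos hβ0 b
    positivity
  set h : ℝ → ℝ := fun x => (1 - x) ^ (a : ℝ) * x ^ (-b : ℝ) with hh
  set h1 : ℝ → ℝ := fun x =>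
    -(a * ((1 - x) ^ (a - 1 : ℝ) * x ^ (-b : ℝ))) -
      b * ((1 - x) ^ (a : ℝ) * x ^ (-b - 1 : ℝ)) with hh1
  set h2 : ℝ → ℝ := fun x =>
    a * (a - 1) * ((1 - x) ^ (a - 1 - 1 : ℝ) * x ^ (-b : ℝ)) +
      2 * (a * b) * ((1 - x) ^ (a - 1 : ℝ) * x ^ (-b - 1 : ℝ)) +
      b * (b + 1) * ((1 - x) ^ (a : ℝ) * x ^ (-b - 1 - 1 : ℝ)) with hh2
  -- v agrees with an explicit function on the interval
  have hveq : ∀ x ∈ Set.Ioo β 1, v x = -c / r + B * x + C * h x := by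
    intro x hx
    have hx0 : 0 < x := lt_trans hβ0 hx.1
    have hx1 : 0 < 1 - x := by linarith [hx.2]
    show -c / r + B * x + K * ((1 - x) / (1 - β)) ^ (a : ℝ) * (x / β) ^ (-b : ℝ)
        = -c / r + B * x + C * h x
    rw [Real.div_rpow hx1.le h1β.le, Real.div_rpow hx0.le hβ0.le]
    rw [hC, hh]
    rw [Real.rpow_neg h1β.le, Real.rpow_neg hβ0.le]
    have e1 : (1 - β) ^ (a : ℝ) ≠ 0 := (Real.rpow_pos_of_pos h1β a).ne'
    have e2 : β ^ (b : ℝ) ≠ 0 := (Real.rpow_pos_of_pos hβ0 b).ne'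
    field_simp
  have hx01 : ∀ x ∈ Set.Ioo β 1, 0 < x ∧ 0 < 1 - x := by
    intro x hx
    exact ⟨lt_trans hβ0 hx.1, by linarith [hx.2]⟩
  -- derivative of h
  have hd1 : ∀ x ∈ Set.Ioo β 1, HasDerivAt h (h1 x) x := by
    intro x hx
    obtain ⟨hx0, hx1⟩ := hx01 x hx
    have hu : HasDerivAt (fun y : ℝ => 1 - y) (-1) x := by
      simpa using (hasDerivAt_id x).const_sub 1
    have hu' : HasDerivAt (fun y : ℝ => (1 - y) ^ (a : ℝ))
        (-1 * a * (1 - x) ^ (a - 1 : ℝ)) x := hu.rpow_const (Or.inl hx1.ne')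
    have hv' : HasDerivAt (fun y : ℝ => y ^ (-b : ℝ))
        (1 * (-b) * x ^ (-b - 1 : ℝ)) x :=
      (hasDerivAt_id x).rpow_const (Or.inl hx0.ne')
    have := hu'.mul hv'
    refine this.congr_deriv ?_
    rw [hh1]; ring
  -- derivative of h1
  have hd2 : ∀ x ∈ Set.Ioo β 1, HasDerivAt h1 (h2 x) x := by
    intro x hx
    obtain ⟨hx0, hx1⟩ := hx01 x hx
    have hu : HasDerivAt (fun y : ℝ => 1 - y) (-1) x := by
      simpa using (hasDerivAt_id x).const_sub 1
    have t1 : HasDerivAt (fun y : ℝ => (1 - y) ^ (a - 1 : ℝ))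
        (-1 * (a - 1) * (1 - x) ^ (a - 1 - 1 : ℝ)) x := hu.rpow_const (Or.inl hx1.ne')
    have t2 : HasDerivAt (fun y : ℝ => y ^ (-b : ℝ))
        (1 * (-b) * x ^ (-b - 1 : ℝ)) x :=
      (hasDerivAt_id x).rpow_const (Or.inl hx0.ne')
    have s1 : HasDerivAt (fun y : ℝ => (1 - y) ^ (a : ℝ))
        (-1 * a * (1 - x) ^ (a - 1 : ℝ)) x := hu.rpow_const (Or.inl hx1.ne')
    have s2 : HasDerivAt (fun y : ℝ => y ^ (-b - 1 : ℝ))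
        (1 * (-b - 1) * x ^ (-b - 1 - 1 : ℝ)) x :=
      (hasDerivAt_id x).rpow_const (Or.inl hx0.ne')
    have p1 := t1.mul t2
    have p2 := s1.mul s2
    have := ((p1.const_mul a).neg).sub (p2.const_mul b)
    refine this.congr_deriv ?_
    rw [hh2]; ring
  -- first derivative of v
  have hdv : ∀ x ∈ Set.Ioo β 1, HasDerivAt v (B + C * h1 x) x := by
    intro x hx
    have hev : v =ᶠ[nhds x] fun y => -c / r + B * y + C * h y := by
      filter_upwards [isOpen_Ioo.mem_nhds hx] with y hy using hveq y hy
    have hg : HasDerivAt (fun y => -c / r + B * y + C * h y) (B + C * h1 x) x := by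
      have := (((hasDerivAt_id x).const_mul B).const_add (-c / r)).add
        ((hd1 x hx).const_mul C)
      exact this.congr_deriv (by ring)
    exact hg.congr_of_eventuallyEq hev
  have hderiv1 : ∀ x ∈ Set.Ioo β 1, deriv v x = B + C * h1 x := fun x hx =>
    (hdv x hx).deriv
  -- second derivative of v
  have hderiv2 : ∀ x ∈ Set.Ioo β 1, deriv (deriv v) x = C * h2 x := by
    intro x hx
    have hev : deriv v =ᶠ[nhds x] fun y => B + C * h1 y := by
      filter_upwards [isOpen_Ioo.mem_nhds hx] with y hy using hderiv1 y hy
    rw [hev.deriv_eq]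
    exact (((hd2 x hx).const_mul C).const_add B).deriv
  have hpos : ∀ x ∈ Set.Ioo β 1, 0 < deriv (deriv v) x := by
    intro x hx
    obtain ⟨hx0, hx1⟩ := hx01 x hx
    rw [hderiv2 x hx, hh2]
    have q1 : 0 < (1 - x) ^ (a - 1 - 1 : ℝ) * x ^ (-b : ℝ) :=
      mul_pos (Real.rpow_pos_of_pos hx1 _) (Real.rpow_pos_of_pos hx0 _)
    have q2 : 0 < (1 - x) ^ (a - 1 : ℝ) * x ^ (-b - 1 : ℝ) :=
      mul_pos (Real.rpow_pos_of_pos hx1 _) (Real.rpow_pos_of_pos hx0 _)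
    have q3 : 0 < (1 - x) ^ (a : ℝ) * x ^ (-b - 1 - 1 : ℝ) :=
      mul_pos (Real.rpow_pos_of_pos hx1 _) (Real.rpow_pos_of_pos hx0 _)
    have := mul_pos (mul_pos hapos ha1) q1
    have := mul_pos (by positivity : (0:ℝ) < 2 * (a * b)) q2
    have := mul_pos (by positivity : (0:ℝ) < b * (b + 1)) q3
    positivity
  have hcont : ContinuousOn v (Set.Ioo β 1) := fun x hx =>
    (hdv x hx).continuousAt.continuousWithinAt
  have hstrict : StrictConvexOn ℝ (Set.Ioo β 1) v := by
    apply strictConvexOn_of_deriv2_pos (convex_Ioo β 1) hcont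
    intro x hx
    rw [interior_Ioo] at hx
    simpa only [Function.iterate_succ, Function.iterate_zero, Function.comp_apply, id_eq] using hpos x hx
  exact ⟨hstrict.convexOn, hstrict⟩
end

section
/- Let r, κ, φ_a, φ_b > 0 and v_a(π), v_b(π) > 0. Define w_{ab} = κ(φ_a v_a + φ_b v_b)/(r + κ(φ_a + φ_b)). Then v_a > w_{ab} and v_b > w_{ab} hold simultaneously if and only if κφ_a/(r + κφ_a) < v_b/v_a < (r + κφ_b)/(κφ_b). -/
/-- Ordering lemma: with `w_{ab} = κ(φ_a v_a + φ_b v_b)/(r + κ(φ_a + φ_b))`,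
both `v_a > w_{ab}` and `v_b > w_{ab}` hold iff
`κφ_a/(r+κφ_a) < v_b/v_a < (r+κφ_b)/(κφ_b)`. -/
theorem stmt13 (r κ φa φb va vb : ℝ) (hr : 0 < r) (hκ : 0 < κ)
    (hφa : 0 < φa) (hφb : 0 < φb) (hva : 0 < va) (hvb : 0 < vb) :
    (κ * (φa * va + φb * vb) / (r + κ * (φa + φb)) < va ∧
     κ * (φa * va + φb * vb) / (r + κ * (φa + φb)) < vb) ↔
    (κ * φa / (r + κ * φa) < vb / va ∧ vb / va < (r + κ * φb) / (κ * φb)) := by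
  have hD : 0 < r + κ * (φa + φb) := by positivity
  have h1 : 0 < r + κ * φa := by positivity
  have h2 : 0 < κ * φb := by positivity
  rw [div_lt_iff₀ hD, div_lt_iff₀ hD, div_lt_div_iff₀ h1 hva, div_lt_div_iff₀ hva h2]
  constructor
  · rintro ⟨ha, hb⟩
    constructor <;> nlinarith
  · rintro ⟨ha, hb⟩
    constructor <;> nlinarith
end

section
/- Let r, λ_a, λ_b, c, κ, φ_b > 0 with c < λ_a < λ_b. The quantity ĥ(κ) = c λ_b - r λ_a + κφ_b(λ_b - λ_a) is strictly increasing in κ, and the no-learning boundary α̂ satisfying λ_a α̂ - c = r·ŵ_b(α̂), where ŵ_b(π) = κφ_b(λ_b π - c)/(r(r + λ_b π + κφ_b)), is strictly increasing in κ. -/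
/-- `ĥ(κ) = c λ_b - r λ_a + κ φ_b (λ_b - λ_a)` is strictly increasing in `κ`,
and the no-learning boundary `α̂` defined by the indifference condition
`λ_a α̂ - c = r ŵ_b(α̂)`, with
`ŵ_b(π) = κφ_b(λ_b π - c)/(r(r + λ_b π + κφ_b))`, is strictly increasing in `κ`. -/
theorem stmt18 (r lama lamb c φb : ℝ) (hr : 0 < r) (hla : 0 < lama)
    (hab : lama < lamb) (hc : 0 < c) (hca : c < lama) (hφb : 0 < φb) :
    (∀ κ₁ κ₂ : ℝ, 0 < κ₁ → κ₁ < κ₂ →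
      c * lamb - r * lama + κ₁ * φb * (lamb - lama)
        < c * lamb - r * lama + κ₂ * φb * (lamb - lama)) ∧
    (∀ κ₁ κ₂ α₁ α₂ : ℝ, 0 < κ₁ → κ₁ < κ₂ →
      c / lama < α₁ → c / lama < α₂ →
      lama * α₁ - c = κ₁ * φb * (lamb * α₁ - c) / (r + lamb * α₁ + κ₁ * φb) →
      lama * α₂ - c = κ₂ * φb * (lamb * α₂ - c) / (r + lamb * α₂ + κ₂ * φb) →
      α₁ < α₂) := by
  constructor
  · intro κ₁ κ₂ hκ₁ hκ
    have := mul_pos (sub_pos.2 hκ) (mul_pos hφb (sub_pos.2 hab))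
    nlinarith [this]
  · intro κ₁ κ₂ α₁ α₂ hκ₁ hκ h1 h2 e1 e2
    have hκ₂ : 0 < κ₂ := hκ₁.trans hκ
    have hc1 : c < lama * α₁ := by rw [div_lt_iff₀ hla] at h1; linarith [h1]
    have hc2 : c < lama * α₂ := by rw [div_lt_iff₀ hla] at h2; linarith [h2]
    have hα₁ : 0 < α₁ := lt_trans (div_pos hc hla) h1
    have hα₂ : 0 < α₂ := lt_trans (div_pos hc hla) h2
    have hD1 : (0:ℝ) < r + lamb * α₁ + κ₁ * φb := by
      have := mul_pos (hla.trans hab) hα₁; have := mul_pos hκ₁ hφb; linarith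
    have hD2 : (0:ℝ) < r + lamb * α₂ + κ₂ * φb := by
      have := mul_pos (hla.trans hab) hα₂; have := mul_pos hκ₂ hφb; linarith
    have e1' : (lama * α₁ - c) * (r + lamb * α₁) = κ₁ * φb * (lamb - lama) * α₁ := by
      have := (div_eq_iff hD1.ne').mp e1.symm
      nlinarith [this]
    have e2' : (lama * α₂ - c) * (r + lamb * α₂) = κ₂ * φb * (lamb - lama) * α₂ := by
      have := (div_eq_iff hD2.ne').mp e2.symm
      nlinarith [this]
    by_contra h
    push_neg at h
    -- h : α₂ ≤ α₁
    have key : (lama * α₂ - c) * (r + lamb * α₂) * α₁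
        ≤ (lama * α₁ - c) * (r + lamb * α₁) * α₂ := by
      have A : (lama * α₂ - c) * α₁ ≤ (lama * α₁ - c) * α₂ := by
        nlinarith [mul_le_mul_of_nonneg_left h hc.le]
      have B : r + lamb * α₂ ≤ r + lamb * α₁ := by
        nlinarith [mul_le_mul_of_nonneg_left h (le_of_lt (hla.trans hab))]
      have hB2 : (0:ℝ) ≤ r + lamb * α₂ := by nlinarith [mul_pos (hla.trans hab) hα₂]
      have hA1 : (0:ℝ) ≤ (lama * α₁ - c) * α₂ :=
        mul_nonneg (by linarith) hα₂.le
      have hP := mul_le_mul A B hB2 hA1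
      linarith [hP]
    rw [e1', e2'] at key
    have hpos : (0:ℝ) < φb * (lamb - lama) * α₁ * α₂ := by
      have := sub_pos.2 hab; positivity
    have hgt := mul_pos (sub_pos.2 hκ) hpos
    linarith [key, hgt]
end
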